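/- Let P̄₁, …, P̄_m be n×n real symmetric positive definite matrices with P̄ⱼ ⪯ γ̄·I for all j and some γ̄ > 0 (the individual covariances from the local filters, Assumption 2), and for each j let Mⱼ be an n×n real positive semidefinite matrix (the neighbors' information contribution Σ_k H_kᵀ R_k⁻¹ H_k in the incremental update). Define the local covariances P̌ⱼ = ((P̄ⱼ)⁻¹ + Mⱼ)⁻¹, let ω₁, …, ω_m be weights with 0 ≤ ωⱼ ≤ 1/(m − 1) and Σⱼ ωⱼ = 1, and set P_Γ = Σⱼ ωⱼ P̌ⱼ. Then the diffusion-update fused covariance P̂ = (Σⱼ (P̌ⱼ)⁻¹ − (m − 1)·(P_Γ)⁻¹)⁻¹ is well defined, symmetric positive definite, and uniformly bounded: P̂ ⪯ γ̄·I. (Theorem 1: boundedness of the estimated covariance produced by the incremental update followed by the ICI diffusion update.) -/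

import Mathlib

/-
The Schur complement criterion makes `[[C, 1], [1, D]] ⪰ 0` equivalent to `C⁻¹ ⪯ D` for `C ≻ 0`.
Averaging the blocks `[[P̌ⱼ, 1], [1, P̌ⱼ⁻¹]] ⪰ 0` with the weights `ωⱼ` therefore gives the
operator convexity `P_Γ⁻¹ ⪯ Σⱼ ωⱼ P̌ⱼ⁻¹`, so `P̂⁻¹ ⪰ Σⱼ (1 - (m - 1) ωⱼ) P̌ⱼ⁻¹`. Since
`ωⱼ ≤ 1/(m - 1)`, this is a convex combination of the `P̌ⱼ⁻¹ = P̄ⱼ⁻¹ + Mⱼ ⪰ P̄ⱼ⁻¹ ⪰ γ̄⁻¹ I`,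
hence `P̂⁻¹ ⪰ γ̄⁻¹ I`, and antitonicity of inversion gives `P̂ ⪯ γ̄ I`.
-/

-- `Matrix.Loewner M N` unfolds to `M ≤ N` in the scoped order `MatrixOrder` used below.
def Matrix.Loewner {n : ℕ} (M N : Matrix (Fin n) (Fin n) ℝ) : Prop :=
  (N - M).PosSemidef

open Finset
open scoped MatrixOrder ComplexOrder

namespace Matrix

variable {ι 𝕜 : Type*} [Fintype ι] [DecidableEq ι] [RCLike 𝕜] {A B D : Matrix ι ι 𝕜}

omit [Fintype ι] [DecidableEq ι] in
theorem PosDef.of_le (hA : A.PosDef) (hAB : A ≤ B) : B.PosDef := by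
  simpa using hA.add_posSemidef hAB

theorem PosDef.posSemidef_fromBlocks_one_one_iff_inv_le (hA : A.PosDef) :
    (fromBlocks A 1 1 D).PosSemidef ↔ A⁻¹ ≤ D := by
  have := hA.isUnit.invertible
  simpa [le_iff] using PosDef.fromBlocks₁₁ (1 : Matrix ι ι 𝕜) D hA

theorem PosDef.posSemidef_fromBlocks_one_one_iff_le_inv (hD : D.PosDef) :
    (fromBlocks A 1 1 D).PosSemidef ↔ D⁻¹ ≤ A := by
  have := hD.isUnit.invertible
  simpa [le_iff] using PosDef.fromBlocks₂₂ A (1 : Matrix ι ι 𝕜) hD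

theorem PosDef.inv_anti (hA : A.PosDef) (hAB : A ≤ B) : B⁻¹ ≤ A⁻¹ := by
  rw [← (hA.of_le hAB).posSemidef_fromBlocks_one_one_iff_inv_le,
    hA.inv.posSemidef_fromBlocks_one_one_iff_le_inv,
    nonsing_inv_nonsing_inv _ hA.det_pos.ne'.isUnit]
  exact hAB

omit [Fintype ι] [DecidableEq ι] in
theorem posDef_sum_smul {J : Type*} {s : Finset J} {C : J → Matrix ι ι 𝕜} {ω : J → ℝ}
    (hC : ∀ j ∈ s, (C j).PosDef) (hω : ∀ j ∈ s, 0 ≤ ω j) (hsum : ∑ j ∈ s, ω j = 1) :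
    (∑ j ∈ s, ω j • C j).PosDef := by
  classical
  obtain ⟨j₀, hj₀, hpos⟩ : ∃ j ∈ s, 0 < ω j :=
    exists_lt_of_sum_lt (by simp [hsum] : ∑ j ∈ s, (0 : ℝ) < ∑ j ∈ s, ω j)
  rw [← add_sum_erase s _ hj₀]
  exact ((hC j₀ hj₀).smul hpos).add_posSemidef <| posSemidef_sum _ fun j hj =>
    (hC j (mem_of_mem_erase hj)).posSemidef.smul (hω j (mem_of_mem_erase hj))

theorem inv_sum_smul_le_sum_smul_inv {J : Type*} {s : Finset J} {C : J → Matrix ι ι 𝕜}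
    {ω : J → ℝ} (hC : ∀ j ∈ s, (C j).PosDef) (hω : ∀ j ∈ s, 0 ≤ ω j)
    (hsum : ∑ j ∈ s, ω j = 1) :
    (∑ j ∈ s, ω j • C j)⁻¹ ≤ ∑ j ∈ s, ω j • (C j)⁻¹ := by
  rw [← (posDef_sum_smul hC hω hsum).posSemidef_fromBlocks_one_one_iff_inv_le]
  have hblocks : fromBlocks (∑ j ∈ s, ω j • C j) 1 1 (∑ j ∈ s, ω j • (C j)⁻¹) =
      ∑ j ∈ s, ω j • fromBlocks (C j) 1 1 (C j)⁻¹ := by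
    ext (i | i) (k | k) <;> simp [sum_apply, ← sum_smul, hsum]
  rw [hblocks]
  exact posSemidef_sum _ fun j hj => PosSemidef.smul
    ((hC j hj).posSemidef_fromBlocks_one_one_iff_inv_le.2 le_rfl) (hω j hj)

theorem inv_smul_one {c : ℝ} (hc : c ≠ 0) : (c • 1 : Matrix ι ι 𝕜)⁻¹ = c⁻¹ • 1 :=
  inv_eq_left_inv <| by rw [smul_mul_smul, inv_mul_cancel₀ hc, one_smul, one_mul]

-- The inverse `P̂⁻¹` of the covariance fused by inverse covariance intersection.
noncomputable def iciInformation {J : Type*} [Fintype J] (ω : J → ℝ)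
    (C : J → Matrix ι ι 𝕜) : Matrix ι ι 𝕜 :=
  ∑ j, (C j)⁻¹ - ((Fintype.card J : ℝ) - 1) • (∑ j, ω j • C j)⁻¹

theorem le_iciInformation {J : Type*} [Fintype J] {ω : J → ℝ} {C : J → Matrix ι ι 𝕜}
    {L : Matrix ι ι 𝕜} (hC : ∀ j, (C j).PosDef) (hL : ∀ j, L ≤ (C j)⁻¹)
    (hω₀ : ∀ j, 0 ≤ ω j) (hω₁ : ∀ j, ((Fintype.card J : ℝ) - 1) * ω j ≤ 1)
    (hsum : ∑ j, ω j = 1) :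
    L ≤ iciInformation ω C := by
  set k : ℝ := (Fintype.card J : ℝ) - 1
  have : Nonempty J := by
    by_contra h
    simp [not_nonempty_iff.1 h] at hsum
  have hk : 0 ≤ k := sub_nonneg.2 (by exact_mod_cast Fintype.card_pos)
  calc L ≤ ∑ j, (1 - k * ω j) • (C j)⁻¹ := by
        refine (convex_Ici L).sum_mem (fun j _ => sub_nonneg.2 (hω₁ j)) ?_ fun j _ => hL j
        simp [sum_sub_distrib, ← mul_sum, hsum, k]
    _ = ∑ j, (C j)⁻¹ - k • ∑ j, ω j • (C j)⁻¹ := by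
        simp [sub_smul, smul_sum, smul_smul, sum_sub_distrib]
    _ ≤ iciInformation ω C :=
        sub_le_sub_left (smul_le_smul_of_nonneg_left
          (inv_sum_smul_le_sum_smul_inv (fun j _ => hC j) (fun j _ => hω₀ j) hsum) hk) _

end Matrix

open Matrix

/-- **Theorem 1.** Boundedness of the covariance produced by the incremental update
followed by the ICI diffusion update: with individual covariances `P̄ⱼ ⪯ γ̄·I`
(Assumption 2), positive semidefinite neighbor information contributions `Mⱼ`,
local covariances `P̌ⱼ = ((P̄ⱼ)⁻¹ + Mⱼ)⁻¹`, weights `0 ≤ ωⱼ ≤ 1/(m−1)` summing to one,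
and `P_Γ = Σⱼ ωⱼ P̌ⱼ`, the fused covariance
`P̂ = (Σⱼ (P̌ⱼ)⁻¹ − (m−1)(P_Γ)⁻¹)⁻¹` is well defined, symmetric positive definite,
and uniformly bounded by `γ̄·I`. -/
theorem diukf_ici_covariance_bounded
    {n m : ℕ} (hm : 2 ≤ m)
    (Pbar : Fin m → Matrix (Fin n) (Fin n) ℝ) (hPbar : ∀ j, (Pbar j).PosDef)
    (γbar : ℝ) (hγ : 0 < γbar)
    (hPup : ∀ j, Matrix.Loewner (Pbar j) (γbar • (1 : Matrix (Fin n) (Fin n) ℝ)))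
    (M : Fin m → Matrix (Fin n) (Fin n) ℝ) (hM : ∀ j, (M j).PosSemidef)
    (Pcheck : Fin m → Matrix (Fin n) (Fin n) ℝ)
    (hPcheck : ∀ j, Pcheck j = ((Pbar j)⁻¹ + M j)⁻¹)
    (ω : Fin m → ℝ) (hω0 : ∀ j, 0 ≤ ω j) (hω1 : ∀ j, ω j ≤ 1 / ((m : ℝ) - 1))
    (hωsum : ∑ j, ω j = 1)
    (PΓ : Matrix (Fin n) (Fin n) ℝ) (hPΓ : PΓ = ∑ j, ω j • Pcheck j) :
    (∑ j, (Pcheck j)⁻¹ - ((m : ℝ) - 1) • PΓ⁻¹).PosDef ∧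
    ((∑ j, (Pcheck j)⁻¹ - ((m : ℝ) - 1) • PΓ⁻¹)⁻¹).PosDef ∧
    Matrix.Loewner (∑ j, (Pcheck j)⁻¹ - ((m : ℝ) - 1) • PΓ⁻¹)⁻¹
      (γbar • (1 : Matrix (Fin n) (Fin n) ℝ)) := by
  have hm1 : (0 : ℝ) < m - 1 := by
    have : (2 : ℝ) ≤ m := by exact_mod_cast hm
    linarith
  have hinfo : ∀ j, ((Pbar j)⁻¹ + M j).PosDef := fun j => (hPbar j).inv.add_posSemidef (hM j)
  have hPcheck_inv : ∀ j, (Pcheck j)⁻¹ = (Pbar j)⁻¹ + M j := fun j => by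
    rw [hPcheck, nonsing_inv_nonsing_inv _ (hinfo j).det_pos.ne'.isUnit]
  have hlower : ∀ j, γbar⁻¹ • 1 ≤ (Pcheck j)⁻¹ := fun j => by
    rw [hPcheck_inv, ← inv_smul_one hγ.ne']
    exact ((hPbar j).inv_anti (hPup j)).trans
      (le_add_of_nonneg_right (nonneg_iff_posSemidef.2 (hM j)))
  have hfused : γbar⁻¹ • 1 ≤ ∑ j, (Pcheck j)⁻¹ - ((m : ℝ) - 1) • PΓ⁻¹ := by
    have := le_iciInformation (fun j => hPcheck j ▸ (hinfo j).inv) hlower hω0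
      (fun j => by simpa using (le_div_iff₀' hm1).1 (hω1 j)) hωsum
    rwa [iciInformation, Fintype.card_fin, ← hPΓ] at this
  have hlower_pd : (γbar⁻¹ • 1 : Matrix (Fin n) (Fin n) ℝ).PosDef :=
    PosDef.one.smul (inv_pos.2 hγ)
  have hpd := hlower_pd.of_le hfused
  refine ⟨hpd, hpd.inv, ?_⟩
  have hupper := hlower_pd.inv_anti hfused
  rwa [inv_smul_one (inv_ne_zero hγ.ne'), inv_inv] at hupper
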